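/- The volume of a cone does not change when the apex moves parallel to the base plane: with base S ⊆ ℝ² at height 0 and apexes a = (a₁, a₂, h), a' = (a₁', a₂', h) at the same height h > 0, the cones over S with apex a and with apex a' have equal volume. -/

import Mathlib

/-!
The shear `(x, z) ↦ (x + (z / h) • v, z)` translates every horizontal slice, so by Fubini and
translation invariance it preserves Lebesgue measure. Since the apex `a` lies at height `h`, the
point at parameter `t` on a segment of the cone with apex `a` lies at height `t * h`, and the shear
moves it by `t • v`: it maps the cone with apex `a` onto the cone with apex `a + (v, 0)`.
-/

open MeasureTheory Set

section Shear

variable {E F : Type*} [MeasurableSpace E] [MeasurableSpace F] [AddGroup E]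
  [MeasurableAdd₂ E] [MeasurableSub₂ E] {f : F → E} (hf : Measurable f)

def MeasurableEquiv.addShear : E × F ≃ᵐ E × F where
  toFun x := (x.1 + f x.2, x.2)
  invFun x := (x.1 - f x.2, x.2)
  left_inv x := by simp
  right_inv x := by simp
  measurable_toFun := by
    change Measurable fun x : E × F => (x.1 + f x.2, x.2)
    fun_prop
  measurable_invFun := by
    change Measurable fun x : E × F => (x.1 - f x.2, x.2)
    fun_prop

theorem MeasureTheory.measurePreserving_addShear (μ : Measure E) [μ.IsAddRightInvariant]
    [SFinite μ] (ν : Measure F) [SFinite ν] :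
    MeasurePreserving (MeasurableEquiv.addShear hf) (μ.prod ν) (μ.prod ν) := by
  have hskew : MeasurePreserving (fun x : F × E => (x.1, x.2 + f x.1)) (ν.prod μ) (ν.prod μ) :=
    (MeasurePreserving.id ν).skew_product (g := fun z x => x + f z) (by fun_prop)
      (ae_of_all _ fun z => (measurePreserving_add_right μ (f z)).map_eq)
  exact (Measure.measurePreserving_swap.comp hskew).comp Measure.measurePreserving_swap

end Shear

section Cone

variable {E : Type*} [AddCommGroup E] [Module ℝ E]

def cone (S : Set E) (a : E × ℝ) : Set (E × ℝ) :=
  {x | ∃ p ∈ S, ∃ t ∈ Icc (0 : ℝ) 1, x = (1 - t) • ((p, (0 : ℝ)) : E × ℝ) + t • a}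

theorem shear_one_sub_smul_add_smul (p : E) (a : E × ℝ) (ha : a.2 ≠ 0) (v : E) (t : ℝ) :
    (fun x : E × ℝ => (x.1 + (x.2 / a.2) • v, x.2)) ((1 - t) • (p, 0) + t • a) =
      (1 - t) • (p, 0) + t • (a.1 + v, a.2) := by
  have hz : ((1 - t) • ((p, (0 : ℝ)) : E × ℝ) + t • a).2 / a.2 = t := by
    simp [mul_div_assoc, div_self ha]
  ext
  · simp only [hz, Prod.fst_add, Prod.smul_fst, smul_add]
    abel
  · simp

theorem preimage_shear_cone (S : Set E) (a : E × ℝ) (ha : a.2 ≠ 0) (v : E) :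
    (fun x : E × ℝ => (x.1 + (x.2 / a.2) • v, x.2)) ⁻¹' cone S (a.1 + v, a.2) = cone S a := by
  have hinj : Function.Injective fun x : E × ℝ => (x.1 + (x.2 / a.2) • v, x.2) := by
    intro x y hxy
    simp only [Prod.mk.injEq] at hxy
    obtain ⟨h1, h2⟩ := hxy
    rw [h2, add_left_inj] at h1
    exact Prod.ext h1 h2
  ext x
  simp only [cone, mem_preimage, mem_ofPred_eq, ← shear_one_sub_smul_add_smul _ a ha v,
    hinj.eq_iff]

end Cone

theorem cone_volume_apex_shear_invariant_general
    (S : Set (ℝ × ℝ))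
    (a a' : (ℝ × ℝ) × ℝ) (h : ℝ) (hh : 0 < h) (ha : a.2 = h) (ha' : a'.2 = h) :
    volume {x : (ℝ × ℝ) × ℝ | ∃ p ∈ S, ∃ t ∈ Set.Icc (0 : ℝ) 1,
        x = (1 - t) • ((p, (0 : ℝ)) : (ℝ × ℝ) × ℝ) + t • a} =
      volume {x : (ℝ × ℝ) × ℝ | ∃ p ∈ S, ∃ t ∈ Set.Icc (0 : ℝ) 1,
        x = (1 - t) • ((p, (0 : ℝ)) : (ℝ × ℝ) × ℝ) + t • a'} := by
  change volume (cone S a) = volume (cone S a')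
  have hapex : a' = (a.1 + (a'.1 - a.1), a.2) := by
    ext <;> simp [ha, ha']
  have hf : Measurable fun z : ℝ => (z / a.2) • (a'.1 - a.1) := by fun_prop
  rw [hapex, ← preimage_shear_cone S a (ha ▸ hh.ne') (a'.1 - a.1), Measure.volume_eq_prod]
  exact (measurePreserving_addShear hf volume volume).measure_preimage_equiv _

theorem cone_volume_apex_shear_invariant
    (S : Set (ℝ × ℝ)) (hS : MeasurableSet S)
    (a a' : (ℝ × ℝ) × ℝ) (h : ℝ) (hh : 0 < h) (ha : a.2 = h) (ha' : a'.2 = h) :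
    volume {x : (ℝ × ℝ) × ℝ | ∃ p ∈ S, ∃ t ∈ Set.Icc (0 : ℝ) 1,
        x = (1 - t) • ((p, (0 : ℝ)) : (ℝ × ℝ) × ℝ) + t • a} =
      volume {x : (ℝ × ℝ) × ℝ | ∃ p ∈ S, ∃ t ∈ Set.Icc (0 : ℝ) 1,
        x = (1 - t) • ((p, (0 : ℝ)) : (ℝ × ℝ) × ℝ) + t • a'} :=
  cone_volume_apex_shear_invariant_general S a a' h hh ha ha'
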